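/- For every β > β_0 > 1/2 (with p = 2), sup_{x ∈ η_2^{−1}((β,∞))} H_{β_0,2}(x) = sup_{x ∈ (m_*(β,2), 1]} H_{β_0,2}(x), where η_2^{−1}((β,∞)) = {t ∈ [−1,1] : η_2(t) > β}. -/

import Mathlib

open Real Set Filter

/-- `I(x) = ½[(1+x)log(1+x) + (1−x)log(1−x)]` (with `Real.log 0 = 0`). -/
noncomputable def bahI (x : ℝ) : ℝ :=
  ((1 + x) * Real.log (1 + x) + (1 - x) * Real.log (1 - x)) / 2

/-- `H_{β,p}(x) = β xᵖ − I(x)`. -/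
noncomputable def bahH (β : ℝ) (p : ℕ) (x : ℝ) : ℝ := β * x ^ p - bahI x

/-- `β*(p) = sup {β ≥ 0 : sup_{x∈[−1,1]} H_{β,p}(x) = 0}`. -/
noncomputable def betaStar (p : ℕ) : ℝ :=
  sSup {β : ℝ | 0 ≤ β ∧ sSup (bahH β p '' Set.Icc (-1 : ℝ) 1) = 0}

/-- inverse hyperbolic tangent. -/
noncomputable def arctanh (x : ℝ) : ℝ := Real.log ((1 + x) / (1 - x)) / 2

/-- `η_p(t) = p⁻¹ t^{1−p} arctanh t` for `t ≠ 0`, and `η_p(0) = 0`. -/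
noncomputable def etaFn (p : ℕ) (t : ℝ) : ℝ :=
  if t = 0 then 0 else (p : ℝ)⁻¹ * t ^ (1 - (p : ℤ)) * arctanh t

/-!
At an interior maximizer `m ∈ (0, 1)` of `H_{β,2}` the derivative vanishes, i.e. `arctanh m = 2βm`,
so `η₂(m) = β`. Since `arctanh` is strictly convex on `[0, 1)` and vanishes at `0`, its secant
slope `arctanh t / t = 2 η₂(t)` is strictly increasing on `(0, 1)`; with `η₂` even and
`η₂(0) = η₂(±1) = 0` this gives `η₂⁻¹((β, ∞)) = (-1, -m) ∪ (m, 1)`. As `H_{β₀,2}` is even,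
its supremum over this set is its supremum over `(m, 1)`, which by continuity is the one
over `(m, 1]`.
-/

lemma Function.Even.image_image_neg {α β : Type*} [Neg α] {f : α → β} (hf : f.Even)
    (s : Set α) : f '' (Neg.neg '' s) = f '' s := by
  rw [← image_comp]
  exact image_congr fun x _ => hf x

lemma csSup_image_Ioo_eq_csSup_image_Ioc {f : ℝ → ℝ} {a b : ℝ} (hab : a < b)
    (hf : ContinuousOn f (Icc a b)) : sSup (f '' Ioo a b) = sSup (f '' Ioc a b) := by
  have hbdd : BddAbove (f '' Ioo a b) :=
    (isCompact_Icc.image_of_continuousOn hf).bddAbove.mono (image_mono Ioo_subset_Icc_self)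
  have hclosure : f '' Ioc a b ⊆ closure (f '' Ioo a b) := by
    rw [← closure_Ioo hab.ne] at hf
    exact (image_mono (Ioc_subset_Icc_self.trans (closure_Ioo hab.ne).ge)).trans hf.image_closure
  have hlub := (isLUB_iff_of_subset_of_subset_closure (image_mono Ioo_subset_Ioc_self)
    hclosure).1 (isLUB_csSup ((nonempty_Ioo.2 hab).image f) hbdd)
  exact hlub.csSup_eq ((nonempty_Ioc.2 hab).image f) |>.symm

lemma arctanh_eq_artanh {x : ℝ} (hx : x ∈ Icc (-1) 1) : arctanh x = artanh x := by
  rw [artanh_eq_half_log hx, arctanh]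
  ring

lemma arctanh_neg (x : ℝ) : arctanh (-x) = -arctanh x := by
  rw [arctanh, arctanh, ← neg_div, ← Real.log_inv, inv_div, sub_neg_eq_add, ← sub_eq_add_neg]

lemma arctanh_zero : arctanh 0 = 0 := by
  simp [arctanh]

-- A junk value: `1 - 1 = 0` and `log 0 = 0`.
lemma arctanh_one : arctanh 1 = 0 := by
  norm_num [arctanh]

lemma exists_lt_arctanh (b : ℝ) : ∃ c ∈ Ioo (-1 : ℝ) 1, ∀ x ∈ Ioo c 1, b < arctanh x := by
  obtain ⟨c, hc, rfl⟩ := artanh_surjOn (mem_univ b)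
  refine ⟨c, hc, fun x hx => ?_⟩
  rw [arctanh_eq_artanh ⟨hc.1.le.trans hx.1.le, hx.2.le⟩]
  exact artanh_lt_artanh hc.1 hx.2 hx.1

lemma hasDerivAt_arctanh {x : ℝ} (hx : x ∈ Ioo (-1 : ℝ) 1) :
    HasDerivAt arctanh (1 / (1 - x ^ 2)) x := by
  have h₁ : 1 + x ≠ 0 := by linarith [hx.1]
  have h₂ : 1 - x ≠ 0 := by linarith [hx.2]
  have hq : HasDerivAt (fun y => (1 + y) / (1 - y)) (2 / (1 - x) ^ 2) x := by
    refine (((hasDerivAt_id x).const_add 1).div ((hasDerivAt_id x).const_sub 1) h₂).congr_deriv ?_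
    simp only [id]
    ring
  have h₃ : 1 - x ^ 2 ≠ 0 := by
    rw [show 1 - x ^ 2 = (1 + x) * (1 - x) by ring]
    exact mul_ne_zero h₁ h₂
  refine ((hq.log (div_ne_zero h₁ h₂)).div_const 2).congr_deriv ?_
  field_simp
  ring

lemma strictConvexOn_arctanh : StrictConvexOn ℝ (Ico 0 1) arctanh := by
  have hderiv : ∀ x ∈ Ico (0 : ℝ) 1, HasDerivAt arctanh (1 / (1 - x ^ 2)) x :=
    fun x hx => hasDerivAt_arctanh ⟨by linarith [hx.1], hx.2⟩
  refine StrictMonoOn.strictConvexOn_of_deriv (convex_Ico 0 1)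
    (fun x hx => (hderiv x hx).continuousAt.continuousWithinAt) ?_
  rw [interior_Ico]
  intro x hx y hy hxy
  rw [(hderiv x (Ioo_subset_Ico_self hx)).deriv, (hderiv y (Ioo_subset_Ico_self hy)).deriv]
  exact one_div_lt_one_div_of_lt (by nlinarith [hy.1, hy.2]) (by nlinarith [hx.1, hxy])

-- Valid also at `t = 0`, where both sides are `0`.
lemma etaFn_two (t : ℝ) : etaFn 2 t = arctanh t / t / 2 := by
  rcases eq_or_ne t 0 with rfl | ht
  · simp [etaFn]
  · rw [etaFn, if_neg ht]
    norm_num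
    ring

lemma etaFn_two_neg (t : ℝ) : etaFn 2 (-t) = etaFn 2 t := by
  rw [etaFn_two, etaFn_two, arctanh_neg, neg_div_neg_eq]

lemma etaFn_two_pos {t : ℝ} (ht : t ∈ Ioo (0 : ℝ) 1) : 0 < etaFn 2 t := by
  rw [etaFn_two, arctanh_eq_artanh ⟨by linarith [ht.1], ht.2.le⟩]
  exact div_pos (div_pos (artanh_pos ht) ht.1) two_pos

lemma strictMonoOn_etaFn_two : StrictMonoOn (etaFn 2) (Ioo 0 1) := by
  intro x hx y hy hxy
  have hslope := strictConvexOn_arctanh.secant_strict_mono (a := 0) ⟨le_rfl, one_pos⟩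
    (Ioo_subset_Ico_self hx) (Ioo_subset_Ico_self hy) hx.1.ne' hy.1.ne' hxy
  simp only [arctanh_zero, sub_zero] at hslope
  rw [etaFn_two, etaFn_two]
  exact div_lt_div_of_pos_right hslope two_pos

lemma etaFn_two_lt_iff {m t : ℝ} (hm : m ∈ Ioo (0 : ℝ) 1) (ht : t ∈ Icc (0 : ℝ) 1) :
    etaFn 2 m < etaFn 2 t ↔ t ∈ Ioo m 1 := by
  have hηm := etaFn_two_pos hm
  rcases eq_or_lt_of_le ht.2 with rfl | ht₁
  · rw [show etaFn 2 1 = 0 by simp [etaFn_two, arctanh_one]]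
    exact iff_of_false hηm.not_gt fun h => h.2.false
  rcases eq_or_lt_of_le ht.1 with rfl | ht₀
  · rw [show etaFn 2 0 = 0 by simp [etaFn]]
    exact iff_of_false hηm.not_gt fun h => lt_asymm h.1 hm.1
  · simp [strictMonoOn_etaFn_two.lt_iff_lt hm ⟨ht₀, ht₁⟩, ht₁]

lemma setOf_etaFn_two_gt {m : ℝ} (hm : m ∈ Ioo (0 : ℝ) 1) :
    {t ∈ Icc (-1 : ℝ) 1 | etaFn 2 m < etaFn 2 t} = Ioo (-1) (-m) ∪ Ioo m 1 := by
  ext t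
  simp only [mem_union, mem_Icc, mem_Ioo]
  rcases le_total 0 t with ht | ht
  · have key := fun ht₁ : t ≤ 1 => etaFn_two_lt_iff hm ⟨ht, ht₁⟩
    simp only [mem_Ioo] at key
    constructor
    · rintro ⟨⟨-, ht₁⟩, h⟩
      exact Or.inr ((key ht₁).1 h)
    · rintro (h | h)
      · linarith [hm.1, h.2]
      · exact ⟨⟨by linarith, h.2.le⟩, (key h.2.le).2 h⟩
  · have key := fun ht₁ : -1 ≤ t => etaFn_two_lt_iff hm ⟨neg_nonneg.2 ht, neg_le.1 ht₁⟩
    simp only [etaFn_two_neg, mem_Ioo] at key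
    constructor
    · rintro ⟨⟨ht₁, -⟩, h⟩
      have := (key ht₁).1 h
      exact Or.inl ⟨by linarith, by linarith⟩
    · rintro (h | h)
      · exact ⟨⟨h.1.le, by linarith⟩, (key h.1.le).2 ⟨by linarith, by linarith⟩⟩
      · linarith [hm.1, h.1]

lemma bahI_neg (x : ℝ) : bahI (-x) = bahI x := by
  unfold bahI
  ring_nf

lemma even_bahH (β : ℝ) {p : ℕ} (hp : Even p) : (bahH β p).Even := fun x => by
  rw [bahH, bahH, hp.neg_pow, bahI_neg]

lemma continuous_bahI : Continuous bahI :=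
  ((continuous_mul_log.comp (continuous_const.add continuous_id)).add
    (continuous_mul_log.comp (continuous_const.sub continuous_id))).div_const 2

lemma continuous_bahH (β : ℝ) (p : ℕ) : Continuous (bahH β p) :=
  (continuous_const.mul (continuous_pow p)).sub continuous_bahI

lemma hasDerivAt_bahI {x : ℝ} (hx : x ∈ Ioo (-1 : ℝ) 1) : HasDerivAt bahI (arctanh x) x := by
  have h₁ : 1 + x ≠ 0 := by linarith [hx.1]
  have h₂ : 1 - x ≠ 0 := by linarith [hx.2]
  have d₁ := (hasDerivAt_mul_log h₁).comp x ((hasDerivAt_id x).const_add 1)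
  have d₂ := (hasDerivAt_mul_log h₂).comp x ((hasDerivAt_id x).const_sub 1)
  refine ((d₁.add d₂).div_const 2).congr_deriv ?_
  rw [arctanh, log_div h₁ h₂]
  ring

lemma hasDerivAt_bahH (β : ℝ) (p : ℕ) {x : ℝ} (hx : x ∈ Ioo (-1 : ℝ) 1) :
    HasDerivAt (bahH β p) (β * (p * x ^ (p - 1)) - arctanh x) x :=
  ((hasDerivAt_pow p x).const_mul β).sub (hasDerivAt_bahI hx)

-- The slope `β p x^(p-1) - arctanh x` of `H_{β,p}` tends to `-∞` as `x → 1`.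
lemma not_isMaxOn_bahH_one (β : ℝ) (p : ℕ) : ¬IsMaxOn (bahH β p) (Icc (-1) 1) 1 := by
  intro hmax
  obtain ⟨c, hc, hlt⟩ := exists_lt_arctanh (|β| * p)
  have hanti : StrictAntiOn (bahH β p) (Icc c 1) := by
    refine strictAntiOn_of_deriv_neg (convex_Icc c 1) (continuous_bahH β p).continuousOn
      fun x hx => ?_
    rw [interior_Icc] at hx
    have hx' : x ∈ Ioo (-1 : ℝ) 1 := ⟨hc.1.trans hx.1, hx.2⟩
    have hpow : |x ^ (p - 1)| ≤ 1 := by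
      rw [abs_pow]
      exact pow_le_one₀ (abs_nonneg x) (abs_le.2 ⟨hx'.1.le, hx'.2.le⟩)
    rw [(hasDerivAt_bahH β p hx').deriv, sub_neg]
    calc β * (p * x ^ (p - 1)) ≤ |β| * (p * |x ^ (p - 1)|) :=
          (le_abs_self _).trans_eq (by rw [abs_mul, abs_mul, Nat.abs_cast])
      _ ≤ |β| * (p * 1) := by gcongr
      _ < arctanh x := by rw [mul_one]; exact hlt x hx
  have hmid : (c + 1) / 2 ∈ Icc c 1 := ⟨by linarith [hc.2], by linarith [hc.2]⟩
  exact (hmax (⟨by linarith [hc.1], hmid.2⟩ : (c + 1) / 2 ∈ Icc (-1 : ℝ) 1)).not_gt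
    (hanti hmid (right_mem_Icc.2 hc.2.le) (by linarith [hc.2]))

lemma etaFn_two_eq_of_isMaxOn {β m : ℝ} (hm : m ∈ Ioo (0 : ℝ) 1)
    (hmax : IsMaxOn (bahH β 2) (Icc (-1) 1) m) : etaFn 2 m = β := by
  have hcrit := (hmax.isLocalMax (Icc_mem_nhds (by linarith [hm.1]) hm.2)).hasDerivAt_eq_zero
    (hasDerivAt_bahH β 2 ⟨by linarith [hm.1], hm.2⟩)
  norm_num at hcrit
  rw [etaFn_two, div_div, div_eq_iff (by linarith [hm.1])]
  linarith

theorem statement5_general (β β₀ : ℝ)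
    (m : ℝ) (hm0 : 0 < m) (hm1 : m ∈ Set.Icc (-1 : ℝ) 1)
    (hmax : IsMaxOn (bahH β 2) (Set.Icc (-1 : ℝ) 1) m) :
    sSup (bahH β₀ 2 '' {t ∈ Set.Icc (-1 : ℝ) 1 | β < etaFn 2 t})
      = sSup (bahH β₀ 2 '' Set.Ioc m 1) := by
  have hm : m ∈ Ioo 0 1 :=
    ⟨hm0, hm1.2.lt_of_ne (by rintro rfl; exact not_isMaxOn_bahH_one β 2 hmax)⟩
  rw [← etaFn_two_eq_of_isMaxOn hm hmax, setOf_etaFn_two_gt hm, image_union, ← image_neg_Ioo,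
    (even_bahH β₀ even_two).image_image_neg, union_self]
  exact csSup_image_Ioo_eq_csSup_image_Ioc hm.2 (continuous_bahH β₀ 2).continuousOn

/-- For `p = 2` and `β > β₀ > 1/2`, with `m = m_*(β,2)` the positive global maximizer of
`H_{β,2}` on `[−1,1]`:
`sup_{x ∈ η₂⁻¹((β,∞))} H_{β₀,2}(x) = sup_{x ∈ (m, 1]} H_{β₀,2}(x)`. -/
theorem statement5 (β β₀ : ℝ) (h0 : 1 / 2 < β₀) (h1 : β₀ < β)
    (m : ℝ) (hm0 : 0 < m) (hm1 : m ∈ Set.Icc (-1 : ℝ) 1)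
    (hmax : IsMaxOn (bahH β 2) (Set.Icc (-1 : ℝ) 1) m) :
    sSup (bahH β₀ 2 '' {t ∈ Set.Icc (-1 : ℝ) 1 | β < etaFn 2 t})
      = sSup (bahH β₀ 2 '' Set.Ioc m 1) :=
  statement5_general β β₀ m hm0 hm1 hmax
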